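/- arXiv:math/9301220 — 3 statements merged into one kernel-verified Lean document; each statement's English description precedes it below -/
import Mathlib

section
/- Let X be a set, f : X → X a map, and d ≥ 2 an integer. For each integer k ≥ 1 suppose the set Fix_k = {x ∈ X : f^k(x) = x} is finite with #Fix_k ≤ d^k, and let Per_n = {x ∈ Fix_n : n is the minimal period of x under f}. Then (#Fix_n − #Per_n)/d^n → 0 as n → ∞; that is, almost all points of Fix_n have period precisely n. -/
open Filter

lemma my_ncard_biUnion_le {α β : Type*} (s : Finset β) (g : β → Set α) :
    (⋃ k ∈ s, g k).ncard ≤ ∑ k ∈ s, (g k).ncard := by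
  classical
  induction s using Finset.induction with
  | empty => simp
  | @insert a t h ih =>
    rw [Finset.set_biUnion_insert, Finset.sum_insert h]
    exact le_trans (Set.ncard_union_le _ _) (by omega)

lemma my_geom_le (d N : ℕ) (hd : 2 ≤ d) :
    ∑ k ∈ Finset.range (N + 1), d ^ k ≤ d ^ (N + 1) := by
  induction N with
  | zero => simp; omega
  | succ n ih =>
    rw [Finset.sum_range_succ]
    have : d ^ (n + 1) + d ^ (n + 1) ≤ d ^ (n + 2) := by
      have : 2 * d ^ (n + 1) ≤ d * d ^ (n + 1) :=
        Nat.mul_le_mul_right _ hd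
      calc d ^ (n + 1) + d ^ (n + 1) = 2 * d ^ (n + 1) := by ring
        _ ≤ d * d ^ (n + 1) := this
        _ = d ^ (n + 2) := by ring
    calc ∑ k ∈ Finset.range (n + 1), d ^ k + d ^ (n + 1)
        ≤ d ^ (n + 1) + d ^ (n + 1) := by omega
      _ ≤ d ^ (n + 2) := this

/-- Let `X` be a set, `f : X → X` a map, and `d ≥ 2` an integer.
For each `k ≥ 1` suppose `Fix_k = {x | f^[k] x = x}` is finite with `#Fix_k ≤ d^k`,
and let `Per_n` be the set of points of `Fix_n` whose minimal period is exactly `n`.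
Then `(#Fix_n − #Per_n)/d^n → 0` as `n → ∞`, i.e. almost all points of `Fix_n`
have period precisely `n`. -/
theorem fix_sub_per_div_tendsto_zero {X : Type*} (f : X → X) (d : ℕ) (hd : 2 ≤ d)
    (hfin : ∀ k : ℕ, 1 ≤ k → {x : X | f^[k] x = x}.Finite)
    (hcard : ∀ k : ℕ, 1 ≤ k → {x : X | f^[k] x = x}.ncard ≤ d ^ k) :
    Tendsto (fun n : ℕ =>
        (({x : X | f^[n] x = x}.ncard : ℝ)
          - ({x : X | f^[n] x = x ∧ Function.minimalPeriod f x = n}.ncard : ℝ))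
        / (d : ℝ) ^ n)
      atTop (nhds 0) := by
  have hd1 : (1 : ℝ) < (d : ℝ) := by
    have : (2 : ℝ) ≤ (d : ℝ) := by exact_mod_cast hd
    linarith
  have hd0 : (0 : ℝ) < (d : ℝ) := by linarith
  -- key cardinality bound
  have key : ∀ n : ℕ, 1 ≤ n →
      ({x : X | f^[n] x = x}.ncard : ℝ)
        - ({x : X | f^[n] x = x ∧ Function.minimalPeriod f x = n}.ncard : ℝ)
        ≤ (d : ℝ) ^ (n / 2 + 1) := by
    intro n hn
    set Fix := {x : X | f^[n] x = x} with hFix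
    set Per := {x : X | f^[n] x = x ∧ Function.minimalPeriod f x = n} with hPer
    have hsub : Per ⊆ Fix := fun x hx => hx.1
    have hFixFin : Fix.Finite := hfin n hn
    have hdiff : (Fix \ Per).ncard = Fix.ncard - Per.ncard :=
      Set.ncard_diff hsub (hFixFin.subset hsub)
    have hle : Per.ncard ≤ Fix.ncard := Set.ncard_le_ncard hsub hFixFin
    have hcast : (Fix.ncard : ℝ) - (Per.ncard : ℝ) = ((Fix \ Per).ncard : ℝ) := by
      rw [hdiff, Nat.cast_sub hle]
    rw [hcast]
    -- Fix \ Per ⊆ ⋃ k ∈ Icc 1 (n/2), Fix_k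
    have hsub2 : Fix \ Per ⊆ ⋃ k ∈ Finset.Icc 1 (n / 2), {x : X | f^[k] x = x} := by
      rintro x ⟨hx, hnx⟩
      have hxn : f^[n] x = x := hx
      have hne : Function.minimalPeriod f x ≠ n := fun h => hnx ⟨hx, h⟩
      have hper : Function.IsPeriodicPt f n x := hxn
      have hdvd : Function.minimalPeriod f x ∣ n := Function.IsPeriodicPt.minimalPeriod_dvd hper
      have hpos : 0 < Function.minimalPeriod f x :=
        Function.IsPeriodicPt.minimalPeriod_pos (by omega) hper
      set m := Function.minimalPeriod f x with hm
      have hlt : m < n := lt_of_le_of_ne (Nat.le_of_dvd (by omega) hdvd) hne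
      have hhalf : m ≤ n / 2 := by
        obtain ⟨c, hc⟩ := hdvd
        have hc2 : 2 ≤ c := by
          rcases c with _ | _ | c
          · omega
          · omega
          · omega
        have : 2 * m ≤ n := by
          calc 2 * m = m * 2 := by ring
            _ ≤ m * c := Nat.mul_le_mul_left _ hc2
            _ = n := hc.symm
        omega
      refine Set.mem_biUnion (Finset.mem_Icc.mpr ⟨hpos, hhalf⟩) ?_
      exact Function.isPeriodicPt_minimalPeriod f x
    have hUfin : (⋃ k ∈ Finset.Icc 1 (n / 2), {x : X | f^[k] x = x}).Finite :=
      Set.Finite.biUnion (Finset.Icc 1 (n / 2)).finite_toSet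
        (fun k hk => hfin k (Finset.mem_Icc.mp hk).1)
    have h1 : (Fix \ Per).ncard ≤ (⋃ k ∈ Finset.Icc 1 (n / 2), {x : X | f^[k] x = x}).ncard :=
      Set.ncard_le_ncard hsub2 hUfin
    have h2 : (⋃ k ∈ Finset.Icc 1 (n / 2), {x : X | f^[k] x = x}).ncard
        ≤ ∑ k ∈ Finset.Icc 1 (n / 2), {x : X | f^[k] x = x}.ncard :=
      my_ncard_biUnion_le _ _
    have h3 : ∑ k ∈ Finset.Icc 1 (n / 2), {x : X | f^[k] x = x}.ncard
        ≤ ∑ k ∈ Finset.Icc 1 (n / 2), d ^ k :=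
      Finset.sum_le_sum (fun k hk => hcard k (Finset.mem_Icc.mp hk).1)
    have h4 : ∑ k ∈ Finset.Icc 1 (n / 2), d ^ k ≤ d ^ (n / 2 + 1) := by
      calc ∑ k ∈ Finset.Icc 1 (n / 2), d ^ k
          ≤ ∑ k ∈ Finset.range (n / 2 + 1), d ^ k := by
            apply Finset.sum_le_sum_of_subset
            intro k hk
            simp only [Finset.mem_Icc] at hk
            simp only [Finset.mem_range]
            omega
        _ ≤ d ^ (n / 2 + 1) := my_geom_le d (n / 2) hd
    have : (Fix \ Per).ncard ≤ d ^ (n / 2 + 1) := by omega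
    calc ((Fix \ Per).ncard : ℝ) ≤ ((d ^ (n / 2 + 1) : ℕ) : ℝ) := by exact_mod_cast this
      _ = (d : ℝ) ^ (n / 2 + 1) := by push_cast; ring
  -- squeeze
  have hbound : ∀ n : ℕ, 1 ≤ n →
      (({x : X | f^[n] x = x}.ncard : ℝ)
          - ({x : X | f^[n] x = x ∧ Function.minimalPeriod f x = n}.ncard : ℝ))
        / (d : ℝ) ^ n ≤ (d : ℝ) * ((1 / d : ℝ)) ^ (n / 2) := by
    intro n hn
    have hpow : (0 : ℝ) < (d : ℝ) ^ n := pow_pos hd0 n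
    rw [div_le_iff₀ hpow]
    refine le_trans (key n hn) ?_
    have hsplit : (d : ℝ) ^ n = (d : ℝ) ^ (n / 2) * (d : ℝ) ^ (n - n / 2) := by
      rw [← pow_add]
      congr 1
      omega
    have hge : (d : ℝ) ^ (n / 2) ≤ (d : ℝ) ^ (n - n / 2) :=
      pow_le_pow_right₀ (le_of_lt hd1) (by omega)
    have hd0' : (d : ℝ) ≠ 0 := ne_of_gt hd0
    have hpowhalf : (0 : ℝ) < (d : ℝ) ^ (n / 2) := pow_pos hd0 _
    calc (d : ℝ) ^ (n / 2 + 1) = (d : ℝ) * (d : ℝ) ^ (n / 2) := by ring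
      _ ≤ (d : ℝ) * (d : ℝ) ^ (n - n / 2) := by
          apply mul_le_mul_of_nonneg_left hge (le_of_lt hd0)
      _ = (d : ℝ) * ((1 / d : ℝ)) ^ (n / 2) * ((d : ℝ) ^ (n / 2) * (d : ℝ) ^ (n - n / 2)) := by
          field_simp
          ring_nf
          rw [← mul_pow, mul_inv_cancel₀ hd0', one_pow]
      _ = (d : ℝ) * ((1 / d : ℝ)) ^ (n / 2) * (d : ℝ) ^ n := by rw [← hsplit]
  have hnonneg : ∀ n : ℕ, 1 ≤ n → 0 ≤
      (({x : X | f^[n] x = x}.ncard : ℝ)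
          - ({x : X | f^[n] x = x ∧ Function.minimalPeriod f x = n}.ncard : ℝ))
        / (d : ℝ) ^ n := by
    intro n hn
    apply div_nonneg _ (le_of_lt (pow_pos hd0 n))
    have hsub : {x : X | f^[n] x = x ∧ Function.minimalPeriod f x = n} ⊆ {x : X | f^[n] x = x} :=
      fun x hx => hx.1
    have := Set.ncard_le_ncard hsub (hfin n hn)
    have : ({x : X | f^[n] x = x ∧ Function.minimalPeriod f x = n}.ncard : ℝ)
        ≤ ({x : X | f^[n] x = x}.ncard : ℝ) := by exact_mod_cast this
    linarith
  -- the majorant tends to 0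
  have hmaj : Tendsto (fun n : ℕ => (d : ℝ) * ((1 / d : ℝ)) ^ (n / 2)) atTop (nhds 0) := by
    have h1 : Tendsto (fun m : ℕ => ((1 / d : ℝ)) ^ m) atTop (nhds 0) := by
      apply tendsto_pow_atTop_nhds_zero_of_lt_one
      · positivity
      · rw [div_lt_one hd0]; exact hd1
    have h2 : Tendsto (fun n : ℕ => n / 2) atTop atTop := by
      apply tendsto_atTop_atTop.mpr
      intro b
      exact ⟨2 * b, fun a ha => by omega⟩
    have := (h1.comp h2).const_mul (d : ℝ)
    simpa using this
  apply squeeze_zero_norm' _ (by simpa using hmaj)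
  filter_upwards [eventually_ge_atTop 1] with n hn
  rw [Real.norm_eq_abs, abs_of_nonneg (hnonneg n hn)]
  exact le_of_le_of_eq (hbound n hn) (by rw [one_div, inv_pow])
end

section
/- Let X be a compact metric space and let μ and ν be Borel probability measures on X. Suppose that for every ε > 0 and every η > 0 there exist finitely many pairwise disjoint closed sets P_1, …, P_N ⊆ X such that diam(P_i) < η for each i, μ(P_1 ∪ ⋯ ∪ P_N) > 1 − ε, and ν(P_i) ≥ μ(P_i) for each i. Then ν(G) ≥ μ(G) for every open set G ⊆ X, and consequently ν = μ. -/
open MeasureTheory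
open ENNReal NNReal

/-- Let `X` be a compact metric space and `μ`, `ν` Borel probability
measures on `X`. Suppose for every `ε > 0` and `η > 0` there are finitely many
pairwise disjoint closed sets `P_1, …, P_N ⊆ X` with `diam (P i) < η`,
`μ (⋃ P i) > 1 − ε`, and `ν (P i) ≥ μ (P i)` for each `i`. Then `ν G ≥ μ G` for
every open `G ⊆ X`, and consequently `ν = μ`. -/
theorem measure_eq_of_pesin_boxes {X : Type*} [MetricSpace X] [CompactSpace X]
    [MeasurableSpace X] [BorelSpace X] (μ ν : Measure X)
    [IsProbabilityMeasure μ] [IsProbabilityMeasure ν]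
    (h : ∀ ε : ℝ, 0 < ε → ∀ η : ℝ, 0 < η →
      ∃ (N : ℕ) (P : Fin N → Set X),
        (∀ i, IsClosed (P i)) ∧
        Pairwise (Function.onFun Disjoint P) ∧
        (∀ i, Metric.diam (P i) < η) ∧
        1 - ENNReal.ofReal ε < μ (⋃ i, P i) ∧
        (∀ i, μ (P i) ≤ ν (P i))) :
    (∀ G : Set X, IsOpen G → μ G ≤ ν G) ∧ ν = μ := by
  classical
  have main : ∀ G : Set X, IsOpen G → μ G ≤ ν G := by
    intro G hG
    refine ENNReal.le_of_forall_pos_le_add fun ε hε _ => ?_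
    -- pick compact K ⊆ G with μ G < μ K + ε/2
    have hhalf : ((ε : ℝ≥0∞) / 2) ≠ 0 := by
      simp [ENNReal.div_eq_zero_iff, hε.ne']
    obtain ⟨K, hKG, hK, hμK⟩ := hG.measurableSet.exists_isCompact_lt_add
      (measure_ne_top μ G) hhalf
    obtain ⟨δ, hδ, hthick⟩ := hK.exists_thickening_subset_open hG hKG
    have hε2 : (0:ℝ) < ε / 2 := by positivity
    obtain ⟨N, P, hPc, hPd, hPdiam, hPbig, hPle⟩ := h (ε / 2) hε2 δ hδ
    set S : Finset (Fin N) := Finset.univ.filter fun i => (P i ∩ K).Nonempty with hS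
    -- pieces meeting K lie in G
    have hPG : ∀ i ∈ S, P i ⊆ G := by
      intro i hi x hx
      obtain ⟨y, hyP, hyK⟩ := (Finset.mem_filter.1 hi).2
      apply hthick
      refine Metric.mem_thickening_iff.2 ⟨y, hyK, ?_⟩
      calc dist x y ≤ Metric.diam (P i) :=
            Metric.dist_le_diam_of_mem ((isCompact_univ.isBounded.subset (Set.subset_univ _))) hx hyP
        _ < δ := hPdiam i
    -- K ∩ ⋃ P ⊆ ⋃_{i ∈ S} P i
    have hsub : K ∩ ⋃ i, P i ⊆ ⋃ i ∈ S, P i := by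
      rintro x ⟨hxK, hxU⟩
      obtain ⟨i, hxi⟩ := Set.mem_iUnion.1 hxU
      exact Set.mem_biUnion (Finset.mem_filter.2 ⟨Finset.mem_univ _, ⟨x, hxi, hxK⟩⟩) hxi
    have hmeas : ∀ i, MeasurableSet (P i) := fun i => (hPc i).measurableSet
    have hUm : MeasurableSet (⋃ i, P i) := MeasurableSet.iUnion fun i => hmeas i
    -- μ (K \ ⋃ P) ≤ ε/2
    have hcompl : μ ((⋃ i, P i)ᶜ) ≤ (ε : ℝ≥0∞) / 2 := by
      have h1 : μ ((⋃ i, P i)ᶜ) = 1 - μ (⋃ i, P i) := by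
        rw [measure_compl hUm (measure_ne_top _ _), measure_univ]
      rw [h1, tsub_le_iff_right]
      calc (1:ℝ≥0∞) ≤ 1 - ENNReal.ofReal (ε / 2) + ENNReal.ofReal (ε / 2) := le_tsub_add
        _ ≤ μ (⋃ i, P i) + ENNReal.ofReal (ε / 2) := add_le_add hPbig.le le_rfl
        _ ≤ (ε : ℝ≥0∞) / 2 + μ (⋃ i, P i) := by
            rw [add_comm]
            gcongr
            rw [ENNReal.ofReal_div_of_pos (by norm_num)]
            simp [ENNReal.ofReal_coe_nnreal]
    have step1 : μ K ≤ μ (⋃ i ∈ S, P i) + (ε : ℝ≥0∞) / 2 := by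
      calc μ K ≤ μ (K ∩ ⋃ i, P i) + μ (K \ ⋃ i, P i) :=
            le_of_eq (measure_inter_add_diff K hUm).symm
        _ ≤ μ (⋃ i ∈ S, P i) + μ ((⋃ i, P i)ᶜ) :=
            add_le_add (measure_mono hsub) (measure_mono (Set.diff_subset_compl _ _))
        _ ≤ μ (⋃ i ∈ S, P i) + (ε : ℝ≥0∞) / 2 := by gcongr
    have step2 : μ (⋃ i ∈ S, P i) ≤ ν G := by
      rw [measure_biUnion_finset (hPd.pairwiseDisjoint _) fun i _ => hmeas i]
      calc ∑ i ∈ S, μ (P i) ≤ ∑ i ∈ S, ν (P i) := Finset.sum_le_sum fun i _ => hPle i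
        _ = ν (⋃ i ∈ S, P i) :=
            (measure_biUnion_finset (hPd.pairwiseDisjoint _) fun i _ => hmeas i).symm
        _ ≤ ν G := measure_mono (Set.iUnion₂_subset hPG)
    calc μ G ≤ μ K + (ε : ℝ≥0∞) / 2 := hμK.le
      _ ≤ (ν G + (ε : ℝ≥0∞) / 2) + (ε : ℝ≥0∞) / 2 :=
          add_le_add (step1.trans (add_le_add step2 le_rfl)) le_rfl
      _ = ν G + ε := by rw [add_assoc, ENNReal.add_halves]
  refine ⟨main, ?_⟩
  have hle : ∀ A : Set X, μ A ≤ ν A := by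
    intro A
    refine ENNReal.le_of_forall_pos_le_add fun ε hε _ => ?_
    obtain ⟨U, hAU, hUo, hU⟩ := A.exists_isOpen_lt_add (μ := ν) (measure_ne_top ν A)
      (by exact_mod_cast hε.ne' : (ε : ℝ≥0∞) ≠ 0)
    calc μ A ≤ μ U := measure_mono hAU
      _ ≤ ν U := main U hUo
      _ ≤ ν A + ε := hU.le
  ext s hs
  refine le_antisymm ?_ (hle s)
  have h1 : μ s + μ sᶜ = 1 := by
    rw [measure_add_measure_compl hs]; exact measure_univ
  have h2 : ν s + ν sᶜ = 1 := by
    rw [measure_add_measure_compl hs]; exact measure_univ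
  by_contra hlt
  push_neg at hlt
  have : μ s + μ sᶜ < ν s + ν sᶜ :=
    ENNReal.add_lt_add_of_lt_of_le (measure_ne_top _ _) hlt (hle sᶜ)
  rw [h1, h2] at this
  exact lt_irrefl _ this
end

section
/- Let X be a compact metric space, let μ be a Borel probability measure on X, and let (ν_n) be a sequence of Borel probability measures on X. Suppose that for every ε > 0 and every η > 0 there exist finitely many pairwise disjoint closed sets P_1, …, P_N ⊆ X such that diam(P_i) < η for each i, μ(P_1 ∪ ⋯ ∪ P_N) > 1 − ε, and liminf_{n→∞} ν_n(P_i) ≥ μ(P_i) for each i. Then liminf_{n→∞} ν_n(G) ≥ μ(G) for every open set G ⊆ X, and consequently ν_n converges weakly to μ. -/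
open MeasureTheory Filter


lemma enn_le_liminf_add (u v : ℕ → ENNReal) :
    atTop.liminf u + atTop.liminf v ≤ atTop.liminf (fun n => u n + v n) := by
  rw [liminf_eq_iSup_iInf_of_nat, liminf_eq_iSup_iInf_of_nat, liminf_eq_iSup_iInf_of_nat]
  have mono : ∀ w : ℕ → ENNReal, Monotone (fun n => ⨅ i ≥ n, w i) := fun w n m hnm =>
    le_iInf₂ fun i hi => iInf₂_le i (hnm.trans hi)
  rw [ENNReal.iSup_add_iSup_of_monotone (mono u) (mono v)]
  exact iSup_mono fun n => le_iInf₂ fun i hi =>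
    add_le_add (iInf₂_le i hi) (iInf₂_le i hi)

lemma sum_liminf_le_liminf_sum {ι : Type*} (s : Finset ι) (f : ι → ℕ → ENNReal) :
    ∑ i ∈ s, atTop.liminf (f i) ≤ atTop.liminf (fun n => ∑ i ∈ s, f i n) := by
  classical
  induction s using Finset.induction_on with
  | empty => simp
  | @insert a s hx ih =>
    simp only [Finset.sum_insert hx]
    calc atTop.liminf (f a) + ∑ i ∈ s, atTop.liminf (f i)
        ≤ atTop.liminf (f a) + atTop.liminf (fun n => ∑ i ∈ s, f i n) := by gcongr
      _ ≤ atTop.liminf (fun n => f a n + ∑ i ∈ s, f i n) := enn_le_liminf_add _ _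

/-- Let `X` be a compact metric space, `μ` a Borel probability measure
on `X`, and `ν n` a sequence of Borel probability measures on `X`. Suppose for every
`ε > 0` and `η > 0` there are finitely many pairwise disjoint closed sets
`P_1, …, P_N ⊆ X` with `diam (P i) < η`, `μ (⋃ P i) > 1 − ε`, and
`liminf_n ν n (P i) ≥ μ (P i)` for each `i`. Then `liminf_n ν n G ≥ μ G` for every
open `G ⊆ X`, and consequently `ν n` converges weakly to `μ`. -/
theorem weak_convergence_of_pesin_boxes {X : Type*} [MetricSpace X] [CompactSpace X]
    [MeasurableSpace X] [BorelSpace X] (μ : Measure X) (ν : ℕ → Measure X)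
    [IsProbabilityMeasure μ] [∀ n, IsProbabilityMeasure (ν n)]
    (h : ∀ ε : ℝ, 0 < ε → ∀ η : ℝ, 0 < η →
      ∃ (N : ℕ) (P : Fin N → Set X),
        (∀ i, IsClosed (P i)) ∧
        Pairwise (Function.onFun Disjoint P) ∧
        (∀ i, Metric.diam (P i) < η) ∧
        1 - ENNReal.ofReal ε < μ (⋃ i, P i) ∧
        (∀ i, μ (P i) ≤ atTop.liminf fun n => ν n (P i))) :
    (∀ G : Set X, IsOpen G → μ G ≤ atTop.liminf fun n => ν n G) ∧
    (∀ φ : BoundedContinuousFunction X ℝ,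
      Tendsto (fun n => ∫ x, φ x ∂(ν n)) atTop (nhds (∫ x, φ x ∂μ))) := by
  have hopen : ∀ G : Set X, IsOpen G → μ G ≤ atTop.liminf fun n => ν n G := by
    intro G hG
    refine ENNReal.le_of_forall_pos_le_add fun ε hε _ => ?_
    set ε2 : ℝ := (ε : ℝ) / 2 with hε2def
    have hε2 : 0 < ε2 := by positivity
    -- inner regularity by closed sets
    obtain ⟨K, hKG, hKcl, hKμ⟩ := hG.measurableSet.exists_isClosed_lt_add (μ := μ)
      (measure_ne_top μ G) (ε := ENNReal.ofReal ε2) (by simpa using hε2)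
    have hKcpt : IsCompact K := hKcl.isCompact
    obtain ⟨δ, hδ, hδG⟩ := hKcpt.exists_thickening_subset_open hG hKG
    obtain ⟨N, P, hclosed, hdisj, hdiam, hcover, hlim⟩ := h ε2 hε2 δ hδ
    classical
    set S : Finset (Fin N) := Finset.univ.filter (fun i => (P i ∩ K).Nonempty) with hS
    have hPmeas : ∀ i, MeasurableSet (P i) := fun i => (hclosed i).measurableSet
    have hPG : ∀ i ∈ S, P i ⊆ G := by
      intro i hi y hy
      obtain ⟨x, hxP, hxK⟩ := (Finset.mem_filter.mp hi).2
      apply hδG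
      rw [Metric.mem_thickening_iff]
      exact ⟨x, hxK, lt_of_le_of_lt
        (Metric.dist_le_diam_of_mem Metric.isBounded_of_compactSpace hy hxP) (hdiam i)⟩
    set U : Set X := ⋃ i, P i with hU
    have hUmeas : MeasurableSet U := MeasurableSet.iUnion fun i => hPmeas i
    -- μ Uᶜ ≤ ε2
    have hcompl : μ Uᶜ ≤ ENNReal.ofReal ε2 := by
      rw [measure_compl hUmeas (measure_ne_top μ U), measure_univ]
      rw [tsub_le_iff_right]
      rw [add_comm]
      exact tsub_le_iff_right.mp hcover.le
    -- K ∩ U ⊆ ⋃ i ∈ S, P i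
    have hsub : K ∩ U ⊆ ⋃ i ∈ S, P i := by
      rintro x ⟨hxK, hxU⟩
      obtain ⟨i, hxi⟩ := Set.mem_iUnion.mp hxU
      exact Set.mem_biUnion (Finset.mem_filter.mpr ⟨Finset.mem_univ i, ⟨x, hxi, hxK⟩⟩) hxi
    have hdisjS : (S : Set (Fin N)).PairwiseDisjoint P := fun i _ j _ hij => hdisj hij
    -- chain
    have hμK : μ K ≤ ∑ i ∈ S, μ (P i) + ENNReal.ofReal ε2 := by
      calc μ K ≤ μ ((K ∩ U) ∪ Uᶜ) := measure_mono (fun x hx => by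
              by_cases hxU : x ∈ U
              · exact Or.inl ⟨hx, hxU⟩
              · exact Or.inr hxU)
        _ ≤ μ (K ∩ U) + μ Uᶜ := measure_union_le _ _
        _ ≤ μ (⋃ i ∈ S, P i) + ENNReal.ofReal ε2 := add_le_add (measure_mono hsub) hcompl
        _ = ∑ i ∈ S, μ (P i) + ENNReal.ofReal ε2 := by
              rw [measure_biUnion_finset hdisjS fun i _ => hPmeas i]
    have hsum : ∑ i ∈ S, μ (P i) ≤ atTop.liminf fun n => ν n G := by
      calc ∑ i ∈ S, μ (P i) ≤ ∑ i ∈ S, atTop.liminf fun n => ν n (P i) :=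
            Finset.sum_le_sum fun i _ => hlim i
        _ ≤ atTop.liminf fun n => ∑ i ∈ S, ν n (P i) := sum_liminf_le_liminf_sum _ _
        _ ≤ atTop.liminf fun n => ν n G :=
            liminf_le_liminf (Eventually.of_forall fun n => by
              rw [← measure_biUnion_finset hdisjS fun i _ => hPmeas i]
              exact measure_mono (Set.iUnion₂_subset hPG))
    have : μ G ≤ atTop.liminf (fun n => ν n G) + ENNReal.ofReal ε2 + ENNReal.ofReal ε2 :=
      hKμ.le.trans (add_le_add_left (hμK.trans (add_le_add_left hsum _)) _)
    calc μ G ≤ atTop.liminf (fun n => ν n G) + ENNReal.ofReal ε2 + ENNReal.ofReal ε2 := this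
      _ = atTop.liminf (fun n => ν n G) + (ENNReal.ofReal ε2 + ENNReal.ofReal ε2) := by ring
      _ = atTop.liminf (fun n => ν n G) + ε := by
          rw [← ENNReal.ofReal_add hε2.le hε2.le]
          norm_num [hε2def, ENNReal.ofReal_coe_nnreal]
  refine ⟨hopen, fun φ => ?_⟩
  exact BoundedContinuousFunction.tendsto_integral_of_forall_integral_le_liminf_integral
    (fun f f_nn => integral_le_liminf_integral_of_forall_isOpen_measure_le_liminf_measure
      f_nn hopen) φ
end
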